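/- Let Ω be an index set, A = ℝ[x_i : i ∈ Ω], V the span of the variables, and let P be a directed family of seminorms generating a locally convex topology τ on V. Let τ̄ be the topology on A generated by the family of submultiplicative seminorms {(nρ)‾ : ρ ∈ P, n ∈ ℕ}. Then τ̄ is a locally multiplicatively convex topology on A whose restriction to V is τ, and τ̄ is the finest such: for any locally multiplicatively convex topology ω on A (generated by a family of submultiplicative seminorms on A) such that the inclusion map (V, τ) ↪ (A, ω) is continuous, the identity map (A, τ̄) → (A, ω) is continuous, i.e. ω is coarser than τ̄. -/

import Mathlib

open MvPolynomial NNReal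

/-- `V`: the `ℝ`-linear span of the variables inside `A = ℝ[x_i : i ∈ Ω]`. -/
noncomputable def Vars (Ω : Type*) : Submodule ℝ (MvPolynomial Ω ℝ) :=
  Submodule.span ℝ (Set.range (X : Ω → MvPolynomial Ω ℝ))

/-- `ρ̄_k(h)` for `k ≥ 1`: the infimum of `Σ_{i=1}^N ρ(f_{i1})⋯ρ(f_{ik})` over all
representations `h = Σ_{i=1}^N f_{i1}⋯f_{ik}` with `f_{ij} ∈ V`. -/
noncomputable def projExtHomog {Ω : Type*} (ρ : Seminorm ℝ ↥(Vars Ω)) (k : ℕ)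
    (h : MvPolynomial Ω ℝ) : ℝ :=
  sInf {r : ℝ | ∃ (N : ℕ) (f : Fin N → Fin k → ↥(Vars Ω)),
    h = ∑ i, ∏ j, ((f i j : MvPolynomial Ω ℝ)) ∧ r = ∑ i, ∏ j, ρ (f i j)}

/-- The projective extension `ρ̄` of a seminorm `ρ` on `V` to the polynomial algebra. -/
noncomputable def projExt {Ω : Type*} (ρ : Seminorm ℝ ↥(Vars Ω))
    (h : MvPolynomial Ω ℝ) : ℝ :=
  |MvPolynomial.coeff 0 h| +
    ∑ k ∈ Finset.Icc 1 h.totalDegree,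
      projExtHomog ρ k (MvPolynomial.homogeneousComponent k h)

/-- The topology on an additive group generated by a family `Q` of (seminorm-like)
functions: the topology generated by all open balls `{x | q(x - c) < ε}`, `q ∈ Q`. -/
def seminormsTopology {E : Type*} [AddCommGroup E] (Q : Set (E → ℝ)) :
    TopologicalSpace E :=
  TopologicalSpace.generateFrom
    {U : Set E | ∃ q ∈ Q, ∃ c : E, ∃ ε : ℝ, 0 < ε ∧ U = {x : E | q (x - c) < ε}}

/-- `q` is a submultiplicative seminorm (as a real-valued function on an algebra). -/
def IsSubmultSeminorm {A : Type*} [CommRing A] [Algebra ℝ A] (q : A → ℝ) : Prop :=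
  (∀ (c : ℝ) (x : A), q (c • x) = |c| * q x) ∧
    (∀ x y : A, q (x + y) ≤ q x + q y) ∧ ∀ x y : A, q (x * y) ≤ q x * q y

/-! The projective extension `ρ̄` is a submultiplicative seminorm: concatenating representations
`h = Σᵢ ∏ⱼ fᵢⱼ` adds their costs, multiplying two of them termwise multiplies the costs and adds
the degrees, and on `V` the subadditivity of `ρ` makes the trivial representation optimal, so
`ρ̄ = ρ` there. Conversely, a submultiplicative seminorm `q` with `q ≤ ρ` on `V` satisfies
`q (Σᵢ ∏ⱼ fᵢⱼ) ≤ Σᵢ ∏ⱼ ρ fᵢⱼ`, hence `q ≤ max (q 1) 1 • ρ̄`. If `(V, τ) → (A, ω)` is continuous,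
directedness of `P` bounds each seminorm of `ω` on `V` by some `n ρ` with `ρ ∈ P`, and the
comparison of topologies follows. -/

open scoped Pointwise Topology

lemma Seminorm.natCast_nnreal_smul_apply {E : Type*} [AddCommGroup E] [Module ℝ E] (n : ℕ)
    (ρ : Seminorm ℝ E) (v : E) : ((n : ℝ≥0) • ρ) v = n * ρ v := by
  simp [NNReal.smul_def]

lemma Real.sInf_le_sInf_mul_sInf {S T U : Set ℝ} (hS : S.Nonempty) (hT : T.Nonempty)
    (hS₀ : ∀ s ∈ S, 0 ≤ s) (hT₀ : ∀ t ∈ T, 0 ≤ t) (hU : BddBelow U) (hST : S * T ⊆ U) :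
    sInf U ≤ sInf S * sInf T := by
  have hleft : ∀ s ∈ S, sInf U ≤ s * sInf T := fun s hs => by
    rw [← smul_eq_mul, ← Real.sInf_smul_of_nonneg (hS₀ s hs)]
    refine csInf_le_csInf hU hT.smul_set ?_
    rintro _ ⟨t, ht, rfl⟩
    exact hST (Set.mul_mem_mul hs ht)
  calc sInf U ≤ sInf (sInf T • S) := by
        refine le_csInf hS.smul_set ?_
        rintro _ ⟨s, hs, rfl⟩
        exact (hleft s hs).trans_eq (mul_comm _ _)
    _ = sInf S * sInf T := by
        rw [Real.sInf_smul_of_nonneg (Real.sInf_nonneg hT₀), smul_eq_mul, mul_comm]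

namespace MvPolynomial

variable {σ R : Type*} [CommSemiring R] {D : ℕ} {φ x y : MvPolynomial σ R}

lemma sum_homogeneousComponent_of_le (hD : φ.totalDegree ≤ D) :
    ∑ k ∈ Finset.range (D + 1), homogeneousComponent k φ = φ := by
  conv_rhs => rw [← sum_homogeneousComponent φ]
  refine (Finset.sum_subset (Finset.range_subset_range.2 (by omega)) fun k _ hk => ?_).symm
  exact homogeneousComponent_eq_zero _ _ (by simp at hk; omega)

lemma homogeneousComponent_mul_eq_sum (hx : x.totalDegree ≤ D) (hy : y.totalDegree ≤ D) (k : ℕ) :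
    homogeneousComponent k (x * y) =
      ∑ p ∈ Finset.range (D + 1) ×ˢ Finset.range (D + 1) with p.1 + p.2 = k,
        homogeneousComponent p.1 x * homogeneousComponent p.2 y := by
  conv_lhs => rw [← sum_homogeneousComponent_of_le hx, ← sum_homogeneousComponent_of_le hy,
    Finset.sum_mul_sum, ← Finset.sum_product']
  rw [map_sum, Finset.sum_filter]
  refine Finset.sum_congr rfl fun p _ => ?_
  have hp : homogeneousComponent p.1 x * homogeneousComponent p.2 y ∈
      homogeneousSubmodule σ R (p.1 + p.2) :=
    (homogeneousComponent_isHomogeneous p.1 x).mul (homogeneousComponent_isHomogeneous p.2 y)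
  simp [homogeneousComponent_of_mem hp, eq_comm]

lemma IsHomogeneous.eq_C_coeff_zero (hφ : φ.IsHomogeneous 0) : φ = C (coeff 0 φ) :=
  totalDegree_eq_zero_iff_eq_C.1 ((totalDegree_zero_iff_isHomogeneous _).2 hφ)

end MvPolynomial

namespace IsSubmultSeminorm

variable {A : Type*} [CommRing A] [Algebra ℝ A] {q : A → ℝ}

lemma map_zero (hq : IsSubmultSeminorm q) : q 0 = 0 := by
  simpa using hq.1 0 0

lemma nonneg (hq : IsSubmultSeminorm q) (x : A) : 0 ≤ q x := by
  have h := hq.2.1 x (-x)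
  have hneg : q (-x) = q x := by simpa using hq.1 (-1) x
  rw [add_neg_cancel, hq.map_zero, hneg] at h
  linarith

lemma map_sum_le (hq : IsSubmultSeminorm q) {α : Type*} (s : Finset α) (g : α → A) :
    q (∑ i ∈ s, g i) ≤ ∑ i ∈ s, q (g i) :=
  Finset.le_sum_of_subadditive q hq.map_zero.le hq.2.1 s g

lemma map_prod_le (hq : IsSubmultSeminorm q) :
    ∀ {k : ℕ} (g : Fin (k + 1) → A), q (∏ j, g j) ≤ ∏ j, q (g j)
  | 0, g => by simp
  | k + 1, g => by
    rw [Fin.prod_univ_succ g, Fin.prod_univ_succ fun j => q (g j)]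
    exact (hq.2.2 _ _).trans (mul_le_mul_of_nonneg_left (hq.map_prod_le _) (hq.nonneg _))

end IsSubmultSeminorm

section RepCosts

variable {Ω : Type*}

lemma vars_eq_homogeneousSubmodule : Vars Ω = homogeneousSubmodule Ω ℝ 1 :=
  (homogeneousSubmodule_one_eq_span_X).symm

def repCosts (ρ : Seminorm ℝ (Vars Ω)) (k : ℕ) (h : MvPolynomial Ω ℝ) : Set ℝ :=
  {r : ℝ | ∃ (N : ℕ) (f : Fin N → Fin k → ↥(Vars Ω)),
    h = ∑ i, ∏ j, ((f i j : MvPolynomial Ω ℝ)) ∧ r = ∑ i, ∏ j, ρ (f i j)}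

variable {ρ : Seminorm ℝ (Vars Ω)} {k a b : ℕ} {h h₁ h₂ : MvPolynomial Ω ℝ}

lemma projExtHomog_eq_sInf_repCosts : projExtHomog ρ k h = sInf (repCosts ρ k h) := rfl

lemma nonneg_of_mem_repCosts {r : ℝ} (hr : r ∈ repCosts ρ k h) : 0 ≤ r := by
  obtain ⟨N, f, -, rfl⟩ := hr
  exact Finset.sum_nonneg fun i _ => Finset.prod_nonneg fun j _ => apply_nonneg _ _

lemma bddBelow_repCosts : BddBelow (repCosts ρ k h) :=
  ⟨0, fun _ => nonneg_of_mem_repCosts⟩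

lemma zero_mem_repCosts_zero : (0 : ℝ) ∈ repCosts ρ k 0 :=
  ⟨0, Fin.elim0, by simp, by simp⟩

lemma coe_mem_repCosts_one (v : Vars Ω) : ρ v ∈ repCosts ρ 1 (v : MvPolynomial Ω ℝ) :=
  ⟨1, fun _ _ => v, by simp, by simp⟩

lemma repCosts_add_subset : repCosts ρ k h₁ + repCosts ρ k h₂ ⊆ repCosts ρ k (h₁ + h₂) := by
  rintro _ ⟨_, ⟨N₁, f₁, rfl, rfl⟩, _, ⟨N₂, f₂, rfl, rfl⟩, rfl⟩
  exact ⟨N₁ + N₂, Fin.append f₁ f₂, by simp [Fin.sum_univ_add], by simp [Fin.sum_univ_add]⟩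

lemma repCosts_mul_subset :
    repCosts ρ a h₁ * repCosts ρ b h₂ ⊆ repCosts ρ (a + b) (h₁ * h₂) := by
  rintro _ ⟨_, ⟨N₁, f₁, rfl, rfl⟩, _, ⟨N₂, f₂, rfl, rfl⟩, rfl⟩
  refine ⟨N₁ * N₂, fun p => Fin.append (f₁ (finProdFinEquiv.symm p).1)
    (f₂ (finProdFinEquiv.symm p).2), ?_, ?_⟩ <;> dsimp only <;>
  rw [Finset.sum_mul_sum, ← Fintype.sum_prod_type', ← Equiv.sum_comp finProdFinEquiv] <;>
  simp only [Equiv.symm_apply_apply, Fin.prod_univ_add, Fin.append_left, Fin.append_right]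

lemma repCosts_smul_subset (c : ℝ) :
    |c| • repCosts ρ (k + 1) h ⊆ repCosts ρ (k + 1) (c • h) := by
  rintro _ ⟨_, ⟨N, f, rfl, rfl⟩, rfl⟩
  refine ⟨N, fun i => Fin.cons (c • f i 0) (Fin.tail (f i)), ?_, ?_⟩
  · simp [Finset.smul_sum, Fin.prod_univ_succ, Fin.tail]
  · simp [Finset.mul_sum, Fin.prod_univ_succ, Fin.tail, mul_assoc, map_smul_eq_mul]

lemma repCosts_smul {c : ℝ} (hc : c ≠ 0) :
    repCosts ρ (k + 1) (c • h) = |c| • repCosts ρ (k + 1) h := by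
  refine Set.Subset.antisymm ?_ (repCosts_smul_subset c)
  rw [Set.subset_smul_set_iff₀ (abs_ne_zero.2 hc), ← abs_inv]
  simpa [smul_smul, inv_mul_cancel₀ hc] using
    repCosts_smul_subset (ρ := ρ) (k := k) (h := c • h) c⁻¹

lemma repCosts_nonempty_of_mem_pow :
    ∀ {k : ℕ} {h : MvPolynomial Ω ℝ}, h ∈ Vars Ω ^ (k + 1) → (repCosts ρ (k + 1) h).Nonempty
  | 0, h, hh => ⟨_, coe_mem_repCosts_one ⟨h, by simpa using hh⟩⟩
  | k + 1, h, hh => by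
    rw [Submodule.pow_succ] at hh
    refine Submodule.mul_induction_on hh (fun m hm n hn => ?_) fun x y ⟨r₁, hr₁⟩ ⟨r₂, hr₂⟩ =>
      ⟨_, repCosts_add_subset (Set.add_mem_add hr₁ hr₂)⟩
    obtain ⟨r, hr⟩ := repCosts_nonempty_of_mem_pow hm
    exact ⟨_, repCosts_mul_subset (Set.mul_mem_mul hr (coe_mem_repCosts_one ⟨n, hn⟩))⟩

lemma repCosts_nonempty (hh : h.IsHomogeneous (k + 1)) : (repCosts ρ (k + 1) h).Nonempty :=
  repCosts_nonempty_of_mem_pow <| by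
    rwa [vars_eq_homogeneousSubmodule, homogeneousSubmodule_one_pow, mem_homogeneousSubmodule]

end RepCosts

section ProjExtHomog

variable {Ω : Type*} {ρ : Seminorm ℝ (Vars Ω)} {k a b : ℕ} {h h₁ h₂ : MvPolynomial Ω ℝ}

lemma projExtHomog_nonneg : 0 ≤ projExtHomog ρ k h :=
  Real.sInf_nonneg fun _ => nonneg_of_mem_repCosts

lemma projExtHomog_zero : projExtHomog ρ k 0 = 0 :=
  (csInf_le bddBelow_repCosts zero_mem_repCosts_zero).antisymm projExtHomog_nonneg

lemma projExtHomog_smul (c : ℝ) :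
    projExtHomog ρ (k + 1) (c • h) = |c| * projExtHomog ρ (k + 1) h := by
  rcases eq_or_ne c 0 with rfl | hc
  · simp [projExtHomog_zero]
  rw [projExtHomog_eq_sInf_repCosts, repCosts_smul hc, Real.sInf_smul_of_nonneg (abs_nonneg c)]
  rfl

lemma projExtHomog_add_le (hh₁ : h₁.IsHomogeneous (k + 1)) (hh₂ : h₂.IsHomogeneous (k + 1)) :
    projExtHomog ρ (k + 1) (h₁ + h₂) ≤ projExtHomog ρ (k + 1) h₁ + projExtHomog ρ (k + 1) h₂ := by
  have hne₁ := repCosts_nonempty (ρ := ρ) hh₁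
  have hne₂ := repCosts_nonempty (ρ := ρ) hh₂
  calc projExtHomog ρ (k + 1) (h₁ + h₂) ≤ sInf (repCosts ρ (k + 1) h₁ + repCosts ρ (k + 1) h₂) :=
        csInf_le_csInf bddBelow_repCosts (hne₁.add hne₂) repCosts_add_subset
    _ = _ := csInf_add hne₁ bddBelow_repCosts hne₂ bddBelow_repCosts

lemma projExtHomog_mul_le (hh₁ : h₁.IsHomogeneous (a + 1)) (hh₂ : h₂.IsHomogeneous (b + 1)) :
    projExtHomog ρ (a + 1 + (b + 1)) (h₁ * h₂) ≤
      projExtHomog ρ (a + 1) h₁ * projExtHomog ρ (b + 1) h₂ :=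
  Real.sInf_le_sInf_mul_sInf (repCosts_nonempty hh₁) (repCosts_nonempty hh₂)
    (fun _ => nonneg_of_mem_repCosts) (fun _ => nonneg_of_mem_repCosts) bddBelow_repCosts
    repCosts_mul_subset

lemma projExtHomog_one_coe (v : Vars Ω) : projExtHomog ρ 1 (v : MvPolynomial Ω ℝ) = ρ v := by
  refine (csInf_le bddBelow_repCosts (coe_mem_repCosts_one v)).antisymm
    (le_csInf ⟨_, coe_mem_repCosts_one v⟩ ?_)
  rintro _ ⟨N, f, hv, rfl⟩
  have hv' : v = ∑ i, f i 0 := Subtype.ext (by simpa using hv)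
  simpa [hv'] using Finset.le_sum_of_subadditive ρ (map_zero ρ).le (map_add_le_add ρ) _ _

lemma le_projExtHomog {q : MvPolynomial Ω ℝ → ℝ} (hq : IsSubmultSeminorm q)
    (hqρ : ∀ v : Vars Ω, q v ≤ ρ v) (hh : h.IsHomogeneous (k + 1)) :
    q h ≤ projExtHomog ρ (k + 1) h := by
  refine le_csInf (repCosts_nonempty hh) ?_
  rintro _ ⟨N, f, rfl, rfl⟩
  refine (hq.map_sum_le _ _).trans (Finset.sum_le_sum fun i _ => ?_)
  exact (hq.map_prod_le _).trans
    (Finset.prod_le_prod (fun j _ => hq.nonneg _) fun j _ => hqρ _)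

end ProjExtHomog

section ProjExtDeg

variable {Ω : Type*} {ρ : Seminorm ℝ (Vars Ω)} {k a b D : ℕ} {h h₁ h₂ : MvPolynomial Ω ℝ}

noncomputable def projExtDeg (ρ : Seminorm ℝ (Vars Ω)) : ℕ → MvPolynomial Ω ℝ → ℝ
  | 0, h => |coeff 0 h|
  | k + 1, h => projExtHomog ρ (k + 1) h

lemma projExtDeg_of_ne_zero (hk : k ≠ 0) : projExtDeg ρ k h = projExtHomog ρ k h := by
  obtain ⟨k, rfl⟩ := Nat.exists_eq_succ_of_ne_zero hk
  rfl

lemma projExtDeg_zero : projExtDeg ρ k 0 = 0 := by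
  cases k
  exacts [by simp [projExtDeg], projExtHomog_zero]

lemma projExtDeg_smul (c : ℝ) : projExtDeg ρ k (c • h) = |c| * projExtDeg ρ k h := by
  cases k
  · simp [projExtDeg, abs_mul]
  · exact projExtHomog_smul c

lemma projExtDeg_add_le (hh₁ : h₁.IsHomogeneous k) (hh₂ : h₂.IsHomogeneous k) :
    projExtDeg ρ k (h₁ + h₂) ≤ projExtDeg ρ k h₁ + projExtDeg ρ k h₂ := by
  cases k
  · simpa [projExtDeg] using abs_add_le _ _
  · exact projExtHomog_add_le hh₁ hh₂

lemma projExtDeg_sum_le {α : Type*} (s : Finset α) (g : α → MvPolynomial Ω ℝ)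
    (hg : ∀ i ∈ s, (g i).IsHomogeneous k) :
    projExtDeg ρ k (∑ i ∈ s, g i) ≤ ∑ i ∈ s, projExtDeg ρ k (g i) :=
  Finset.le_sum_of_subadditive_on_pred _ (IsHomogeneous · k) projExtDeg_zero.le
    (fun _ _ => projExtDeg_add_le) (fun _ _ => IsHomogeneous.add) g hg

lemma projExtDeg_mul_le (hh₁ : h₁.IsHomogeneous a) (hh₂ : h₂.IsHomogeneous b) :
    projExtDeg ρ (a + b) (h₁ * h₂) ≤ projExtDeg ρ a h₁ * projExtDeg ρ b h₂ := by
  rcases a with _ | a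
  · rw [hh₁.eq_C_coeff_zero, C_mul', zero_add, projExtDeg_smul]
    simp [projExtDeg]
  rcases b with _ | b
  · rw [hh₂.eq_C_coeff_zero, mul_comm, C_mul', add_zero, projExtDeg_smul, mul_comm]
    simp [projExtDeg]
  exact projExtHomog_mul_le hh₁ hh₂

lemma projExt_eq_sum (hD : h.totalDegree ≤ D) :
    projExt ρ h = ∑ k ∈ Finset.range (D + 1), projExtDeg ρ k (homogeneousComponent k h) := by
  have hrange : Finset.range (D + 1) = insert 0 (Finset.Icc 1 D) := by
    ext k
    simp only [Finset.mem_range, Finset.mem_insert, Finset.mem_Icc]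
    omega
  rw [hrange, Finset.sum_insert (by simp), projExt]
  congr 1
  · simp [projExtDeg]
  refine Finset.sum_subset (Finset.Icc_subset_Icc_right hD) (fun k hkD hk => ?_) |>.trans
    (Finset.sum_congr rfl fun k hk => (projExtDeg_of_ne_zero (by simp at hk; omega)).symm)
  simp only [Finset.mem_Icc, not_and, not_le] at hkD hk
  rw [homogeneousComponent_eq_zero _ _ (hk hkD.1), projExtHomog_zero]

end ProjExtDeg

section ProjExtSubmult

variable {Ω : Type*} {ρ : Seminorm ℝ (Vars Ω)}

lemma projExt_smul (c : ℝ) (x : MvPolynomial Ω ℝ) : projExt ρ (c • x) = |c| * projExt ρ x := by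
  rw [projExt_eq_sum (totalDegree_smul_le c x), projExt_eq_sum le_rfl, Finset.mul_sum]
  simp only [map_smul, projExtDeg_smul]

lemma projExt_add_le (x y : MvPolynomial Ω ℝ) :
    projExt ρ (x + y) ≤ projExt ρ x + projExt ρ y := by
  set D := max x.totalDegree y.totalDegree
  rw [projExt_eq_sum (D := D) (totalDegree_add x y), projExt_eq_sum (le_max_left _ _),
    projExt_eq_sum (le_max_right _ _), ← Finset.sum_add_distrib]
  refine Finset.sum_le_sum fun k _ => ?_
  rw [map_add]
  exact projExtDeg_add_le (homogeneousComponent_isHomogeneous k x)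
    (homogeneousComponent_isHomogeneous k y)

lemma projExt_mul_le (x y : MvPolynomial Ω ℝ) :
    projExt ρ (x * y) ≤ projExt ρ x * projExt ρ y := by
  set D := x.totalDegree + y.totalDegree
  set s := Finset.range (D + 1) ×ˢ Finset.range (D + 1)
  set w : ℕ × ℕ → ℝ := fun p =>
    projExtDeg ρ p.1 (homogeneousComponent p.1 x) * projExtDeg ρ p.2 (homogeneousComponent p.2 y)
  have hx : x.totalDegree ≤ D := Nat.le_add_right _ _
  have hy : y.totalDegree ≤ D := Nat.le_add_left _ _
  calc projExt ρ (x * y)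
      = ∑ k ∈ Finset.range (D + D + 1), projExtDeg ρ k (homogeneousComponent k (x * y)) :=
        projExt_eq_sum ((totalDegree_mul x y).trans (by omega))
    _ ≤ ∑ k ∈ Finset.range (D + D + 1), ∑ p ∈ s with p.1 + p.2 = k, w p := by
        refine Finset.sum_le_sum fun k _ => ?_
        rw [homogeneousComponent_mul_eq_sum hx hy]
        refine (projExtDeg_sum_le _ _ fun p hp => ?_).trans (Finset.sum_le_sum fun p hp => ?_) <;>
          obtain rfl := (Finset.mem_filter.1 hp).2
        · exact (homogeneousComponent_isHomogeneous _ _).mul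
            (homogeneousComponent_isHomogeneous _ _)
        · exact projExtDeg_mul_le (homogeneousComponent_isHomogeneous _ _)
            (homogeneousComponent_isHomogeneous _ _)
    _ = ∑ p ∈ s, w p :=
        Finset.sum_fiberwise_of_maps_to (fun p hp => by simp [s] at hp ⊢; omega) w
    _ = projExt ρ x * projExt ρ y := by
        rw [projExt_eq_sum hx, projExt_eq_sum hy, Finset.sum_mul_sum, Finset.sum_product]

lemma isSubmultSeminorm_projExt (ρ : Seminorm ℝ (Vars Ω)) : IsSubmultSeminorm (projExt ρ) :=
  ⟨projExt_smul, projExt_add_le, projExt_mul_le⟩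

lemma projExt_coe (v : Vars Ω) : projExt ρ (v : MvPolynomial Ω ℝ) = ρ v := by
  have hv : (v : MvPolynomial Ω ℝ) ∈ homogeneousSubmodule Ω ℝ 1 :=
    vars_eq_homogeneousSubmodule (Ω := Ω) ▸ v.2
  rw [projExt_eq_sum ((mem_homogeneousSubmodule _ _).1 hv).totalDegree_le]
  simp [Finset.sum_range_succ, homogeneousComponent_of_mem hv, projExtDeg,
    projExtHomog_one_coe]

lemma le_projExtDeg {q : MvPolynomial Ω ℝ → ℝ} (hq : IsSubmultSeminorm q)
    (hqρ : ∀ v : Vars Ω, q v ≤ ρ v) {k : ℕ} {h : MvPolynomial Ω ℝ} (hh : h.IsHomogeneous k) :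
    q h ≤ max (q 1) 1 * projExtDeg ρ k h := by
  cases k with
  | zero =>
    rw [hh.eq_C_coeff_zero, C_eq_smul_one, hq.1, mul_comm]
    simpa [projExtDeg] using mul_le_mul_of_nonneg_right (le_max_left (q 1) 1) (abs_nonneg _)
  | succ k =>
    exact (le_projExtHomog hq hqρ hh).trans
      (le_mul_of_one_le_left projExtHomog_nonneg (le_max_right _ _))

lemma le_projExt {q : MvPolynomial Ω ℝ → ℝ} (hq : IsSubmultSeminorm q)
    (hqρ : ∀ v : Vars Ω, q v ≤ ρ v) (x : MvPolynomial Ω ℝ) :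
    q x ≤ max (q 1) 1 * projExt ρ x := by
  conv_lhs => rw [← sum_homogeneousComponent x]
  rw [projExt_eq_sum le_rfl, Finset.mul_sum]
  exact (hq.map_sum_le _ _).trans
    (Finset.sum_le_sum fun k _ => le_projExtDeg hq hqρ (homogeneousComponent_isHomogeneous k x))

end ProjExtSubmult

section SeminormsTopology

variable {E F : Type*} [AddCommGroup E] [AddCommGroup F]

lemma continuous_seminormsTopology_of_le_mul (f : E →+ F) {Q : Set (E → ℝ)} {Q' : Set (F → ℝ)}
    (hQ : ∀ q ∈ Q, q 0 = 0) (hQ' : ∀ q' ∈ Q', ∀ x y, q' (x + y) ≤ q' x + q' y)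
    (hdom : ∀ q' ∈ Q', ∃ q ∈ Q, ∃ C, 0 < C ∧ ∀ x, q' (f x) ≤ C * q x) :
    Continuous[seminormsTopology Q, seminormsTopology Q'] f := by
  refine continuous_generateFrom_iff.2 ?_
  rintro _ ⟨q', hq', c, ε, -, rfl⟩
  obtain ⟨q, hq, C, hC, hle⟩ := hdom q' hq'
  refine (@isOpen_iff_forall_mem_open E (seminormsTopology Q) _).2 fun x₀ (hx₀ : q' (f x₀ - c) < ε) => ?_
  set δ := (ε - q' (f x₀ - c)) / C
  have hδ : 0 < δ := div_pos (by linarith) hC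
  refine ⟨{x | q (x - x₀) < δ}, fun x (hx : q (x - x₀) < δ) => ?_,
    TopologicalSpace.isOpen_generateFrom_of_mem ⟨q, hq, x₀, δ, hδ, rfl⟩, by simp [hQ q hq, hδ]⟩
  calc q' (f x - c) = q' (f (x - x₀) + (f x₀ - c)) := by rw [map_sub, sub_add_sub_cancel]
    _ ≤ q' (f (x - x₀)) + q' (f x₀ - c) := hQ' q' hq' _ _
    _ ≤ C * q (x - x₀) + q' (f x₀ - c) := by grw [hle]
    _ < C * δ + q' (f x₀ - c) := by gcongr
    _ = ε := by rw [mul_div_cancel₀ _ hC.ne']; ring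

variable [Module ℝ E] [Module ℝ F] {ι : Type*} [Nonempty ι] {P : ι → Seminorm ℝ E}

lemma exists_ball_subset_of_mem_nhds_zero
    (hdir : ∀ i j, ∃ k C, 0 < C ∧ ∀ v, max (P i v) (P j v) ≤ C * P k v) {U : Set E}
    (hU : U ∈ @nhds E (seminormsTopology (Set.range fun i => ⇑(P i))) 0) :
    ∃ k δ, 0 < δ ∧ {v | P k v < δ} ⊆ U := by
  let ball : ι × Set.Ioi (0 : ℝ) → Set E := fun p => {v | P p.1 v < p.2}
  have hdirected : Directed (· ≥ ·) ball := by
    rintro ⟨i, δ, hδ⟩ ⟨j, ε, hε⟩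
    obtain ⟨k, C, hC, hk⟩ := hdir i j
    have hlt : ∀ v, P k v < min δ ε / C → max (P i v) (P j v) < min δ ε := fun v hv =>
      (hk v).trans_lt (by rwa [lt_div_iff₀ hC, mul_comm] at hv)
    exact ⟨⟨k, min δ ε / C, div_pos (lt_min hδ hε) hC⟩,
      fun v hv => (le_max_left _ _).trans_lt ((hlt v hv).trans_le (min_le_left _ _)),
      fun v hv => (le_max_right _ _).trans_lt ((hlt v hv).trans_le (min_le_right _ _))⟩
  have hbasis := Filter.hasBasis_iInf_principal hdirected
  have hle : ⨅ p, Filter.principal (ball p) ≤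
      @nhds E (seminormsTopology (Set.range fun i => ⇑(P i))) 0 := by
    rw [seminormsTopology, TopologicalSpace.nhds_generateFrom]
    refine le_iInf₂ fun s ⟨h0s, q, ⟨i, hi⟩, c, ε, hε, hs⟩ => ?_
    subst hi hs
    have h0s : P i (0 - c) < ε := h0s
    rw [Filter.le_principal_iff]
    refine hbasis.mem_iff.2 ⟨⟨i, ε - P i (0 - c), sub_pos.2 h0s⟩, trivial,
      fun v (hv : P i v < ε - P i (0 - c)) => ?_⟩
    calc P i (v - c) = P i (v + (0 - c)) := by rw [zero_sub, sub_eq_add_neg]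
      _ ≤ P i v + P i (0 - c) := map_add_le_add _ _ _
      _ < ε := by linarith
  obtain ⟨⟨k, δ, hδ⟩, -, hsub⟩ := hbasis.mem_iff.1 (hle hU)
  exact ⟨k, δ, hδ, hsub⟩

lemma le_two_div_mul_of_forall_lt_imp_lt_one (p : Seminorm ℝ E) {g : E → ℝ}
    (hg : ∀ (c : ℝ) x, g (c • x) = |c| * g x) {δ : ℝ} (hδ : 0 < δ)
    (H : ∀ x, p x < δ → g x < 1) (x : E) : g x ≤ 2 / δ * p x := by
  have key : ∀ t, 0 < t → t * p x < δ → t * g x < 1 := fun t ht htx => by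
    simpa [hg, abs_of_pos ht] using
      H (t • x) (by simpa [map_smul_eq_mul, abs_of_pos ht] using htx)
  rcases (apply_nonneg p x).eq_or_lt with hx | hx
  · rw [← hx, mul_zero]
    by_contra! hgx
    have := key (g x)⁻¹ (inv_pos.2 hgx) (by simpa [← hx] using hδ)
    exact (inv_mul_cancel₀ hgx.ne').not_lt this
  · have := key (δ / (2 * p x)) (by positivity) (by field_simp; linarith)
    rw [div_mul_eq_mul_div, div_lt_one (by positivity)] at this
    rw [div_mul_eq_mul_div, le_div_iff₀ hδ]
    linarith

lemma exists_le_mul_of_continuous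
    (hdir : ∀ i j, ∃ k C, 0 < C ∧ ∀ v, max (P i v) (P j v) ≤ C * P k v) (f : E →ₗ[ℝ] F)
    {Q' : Set (F → ℝ)} {q' : F → ℝ} (hq' : q' ∈ Q') (hhom : ∀ (c : ℝ) y, q' (c • y) = |c| * q' y)
    (hf : Continuous[seminormsTopology (Set.range fun i => ⇑(P i)), seminormsTopology Q'] f) :
    ∃ k C, 0 < C ∧ ∀ x, q' (f x) ≤ C * P k x := by
  have hq'0 : q' 0 = 0 := by simpa using hhom 0 0
  have hU : f ⁻¹' {y | q' (y - 0) < 1} ∈ @nhds E (seminormsTopology _) 0 :=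
    @IsOpen.mem_nhds E (seminormsTopology _) _ _
      (@Continuous.isOpen_preimage _ _ (seminormsTopology _) (seminormsTopology Q') _ hf _
        (TopologicalSpace.isOpen_generateFrom_of_mem ⟨q', hq', 0, 1, one_pos, rfl⟩))
      (by simp [hq'0])
  obtain ⟨k, δ, hδ, hsub⟩ := exists_ball_subset_of_mem_nhds_zero hdir hU
  exact ⟨k, 2 / δ, by positivity, le_two_div_mul_of_forall_lt_imp_lt_one (P k) (g := q' ∘ f)
    (fun c x => by simp [hhom]) hδ fun x hx => by simpa using hsub hx⟩

end SeminormsTopology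

section FinestLmc

variable {Ω : Type*} {ι : Type*} (P : ι → Seminorm ℝ (Vars Ω))

def projExtSeminorms : Set (MvPolynomial Ω ℝ → ℝ) :=
  {q | ∃ (i : ι) (n : ℕ), 0 < n ∧ q = projExt ((n : ℝ≥0) • P i)}

lemma induced_coe_seminormsTopology_projExtSeminorms :
    TopologicalSpace.induced (fun v : Vars Ω => (v : MvPolynomial Ω ℝ))
        (seminormsTopology (projExtSeminorms P)) =
      seminormsTopology (Set.range fun i => ⇑(P i)) := by
  refine le_antisymm (le_generateFrom ?_) (continuous_iff_le_induced.1 ?_)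
  · rintro _ ⟨_, ⟨i, rfl⟩, c, ε, hε, rfl⟩
    refine ⟨{x | projExt (((1 : ℕ) : ℝ≥0) • P i) (x - c) < ε},
      TopologicalSpace.isOpen_generateFrom_of_mem ⟨_, ⟨i, 1, one_pos, rfl⟩, c, ε, hε, rfl⟩, ?_⟩
    ext v
    change projExt _ ((v : MvPolynomial Ω ℝ) - (c : MvPolynomial Ω ℝ)) < ε ↔ P i (v - c) < ε
    rw [← Submodule.coe_sub, projExt_coe, Seminorm.natCast_nnreal_smul_apply, Nat.cast_one,
      one_mul]
  · refine continuous_seminormsTopology_of_le_mul (Vars Ω).subtype.toAddMonoidHom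
      (by rintro _ ⟨i, rfl⟩; exact map_zero _)
      (by rintro _ ⟨i, n, -, rfl⟩; exact projExt_add_le) ?_
    rintro _ ⟨i, n, hn, rfl⟩
    exact ⟨P i, ⟨i, rfl⟩, n, Nat.cast_pos.2 hn, fun v =>
      ((projExt_coe v).trans (Seminorm.natCast_nnreal_smul_apply n (P i) v)).le⟩

lemma continuous_id_seminormsTopology_projExtSeminorms [Nonempty ι]
    (hdir : ∀ i j : ι, ∃ k : ι, ∃ C : ℝ, 0 < C ∧
      ∀ v : ↥(Vars Ω), max (P i v) (P j v) ≤ C * P k v)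
    {κ : Type*} (S : κ → (MvPolynomial Ω ℝ → ℝ)) (hS : ∀ j, IsSubmultSeminorm (S j))
    (hcont : Continuous[seminormsTopology (Set.range fun i => ⇑(P i)),
      seminormsTopology (Set.range S)] fun v : Vars Ω => (v : MvPolynomial Ω ℝ)) :
    Continuous[seminormsTopology (projExtSeminorms P), seminormsTopology (Set.range S)] id := by
  refine continuous_seminormsTopology_of_le_mul (AddMonoidHom.id _)
    (by rintro _ ⟨i, n, -, rfl⟩; exact (isSubmultSeminorm_projExt _).map_zero)
    (by rintro _ ⟨j, rfl⟩; exact (hS j).2.1) ?_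
  rintro _ ⟨j, rfl⟩
  obtain ⟨k, C, hC, hle⟩ := exists_le_mul_of_continuous hdir (Vars Ω).subtype
    (Set.mem_range_self j) (hS j).1 hcont
  refine ⟨_, ⟨k, ⌈C⌉₊, Nat.ceil_pos.2 hC, rfl⟩, max (S j 1) 1, lt_max_of_lt_right one_pos,
    le_projExt (hS j) fun v => ?_⟩
  rw [Seminorm.natCast_nnreal_smul_apply]
  exact (hle v).trans (mul_le_mul_of_nonneg_right (Nat.le_ceil C) (apply_nonneg _ _))

end FinestLmc

theorem projExt_topology_finest_lmc.{u} (Ω : Type*)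
    {ι : Type*} [Nonempty ι] (P : ι → Seminorm ℝ ↥(Vars Ω))
    (hdir : ∀ i j : ι, ∃ k : ι, ∃ C : ℝ, 0 < C ∧
      ∀ v : ↥(Vars Ω), max (P i v) (P j v) ≤ C * P k v) :
    (∀ (i : ι) (n : ℕ), 0 < n → IsSubmultSeminorm (projExt ((n : ℝ≥0) • P i))) ∧
      (TopologicalSpace.induced (fun v : ↥(Vars Ω) => (v : MvPolynomial Ω ℝ))
          (seminormsTopology
            {q : MvPolynomial Ω ℝ → ℝ |
              ∃ (i : ι) (n : ℕ), 0 < n ∧ q = projExt ((n : ℝ≥0) • P i)}) =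
        seminormsTopology (Set.range fun i : ι => ⇑(P i))) ∧
      ∀ (κ : Type u) (S : κ → (MvPolynomial Ω ℝ → ℝ)),
        (∀ j : κ, IsSubmultSeminorm (S j)) →
        @Continuous ↥(Vars Ω) (MvPolynomial Ω ℝ)
            (seminormsTopology (Set.range fun i : ι => ⇑(P i)))
            (seminormsTopology (Set.range S))
            (fun v : ↥(Vars Ω) => (v : MvPolynomial Ω ℝ)) →
        @Continuous (MvPolynomial Ω ℝ) (MvPolynomial Ω ℝ)
            (seminormsTopology
              {q : MvPolynomial Ω ℝ → ℝ |
                ∃ (i : ι) (n : ℕ), 0 < n ∧ q = projExt ((n : ℝ≥0) • P i)})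
            (seminormsTopology (Set.range S)) id := by
  exact ⟨fun i n _ => isSubmultSeminorm_projExt _,
    induced_coe_seminormsTopology_projExtSeminorms P,
    fun κ S hS hcont => continuous_id_seminormsTopology_projExtSeminorms P hdir S hS hcont⟩
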